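/- For every n ≥ 1 there exists a polynomial P_n in three variables with nonnegative integer coefficients such that both μ_n · ∏_{k=1}^{n+1} [ν+k]_q^{⌊(n+1)/k⌋} = Q^n · [ν+1]_q · P_n(q, Q, [ν]_q) and σ(μ_n) · ∏_{k=1}^{n+1} [ν+k]_q^{⌊(n+1)/k⌋} = q · Q · [ν+1]_q · P_n(q, Q, [ν]_q) hold in K. Equivalently (Theorem 2.4): J_{ν+1}((1−q)z;q)/J_ν((1−q)z;q) = (1−q)z + ∑_{n≥1} (N_{n,ν}(q)/D_{n,ν}(q)) q^{n+ν} z^{2n−1}, where N_{n,ν}(q) and D_{n,ν}(q) = ∏_{k=1}^{n} [k+ν]_q^{⌊n/k⌋} are the same numerators and denominators as in the base-q^{−1} expansion of Theorem 1.4, and each N_{n,ν}(q) is a polynomial in q, q^ν and [ν]_q with nonnegative integer coefficients. -/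

import Mathlib

/- Let `K` be the fraction field of `ℚ[q,Q]`, where `Q` plays the role of `q^ν`.
`θν` and `θν1` are the series `θ_ν` and `θ_{ν+1}` of the Hahn–Exton `q`-Bessel
functions, and `μ n` are the coefficients of `θ_{ν+1}/θ_ν`. -/

noncomputable section

abbrev K : Type := FractionRing (MvPolynomial (Fin 2) ℚ)

def qv : K := algebraMap (MvPolynomial (Fin 2) ℚ) K (MvPolynomial.X 0)

def Qv : K := algebraMap (MvPolynomial (Fin 2) ℚ) K (MvPolynomial.X 1)

/-- The q-Pochhammer symbol `(a;q)_n`. -/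
def qPoch (a : K) (n : ℕ) : K := ∏ j ∈ Finset.range n, (1 - a * qv ^ j)

/-- `[ν+k]_q = (1 - Q q^k)/(1-q)`. -/
def brk (k : ℕ) : K := (1 - Qv * qv ^ k) / (1 - qv)

/-- `[ν]_q = (1 - Q)/(1-q)`. -/
def brNu : K := (1 - Qv) / (1 - qv)

/-- `θ_ν(x)`. -/
def θν : PowerSeries K :=
  PowerSeries.mk fun n =>
    (-1) ^ n * qv ^ (n * (n - 1) / 2) * Qv ^ n * (1 - qv) ^ (2 * n)
      / (qPoch qv n * qPoch (Qv * qv) n)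

/-- `θ_{ν+1}(x)`, i.e. `θ_ν` with `Q` replaced by `Qq`. -/
def θν1 : PowerSeries K :=
  PowerSeries.mk fun n =>
    (-1) ^ n * qv ^ (n * (n - 1) / 2) * (Qv * qv) ^ n * (1 - qv) ^ (2 * n)
      / (qPoch qv n * qPoch (Qv * qv ^ 2) n)

/-- The coefficients `μ_n` of `θ_{ν+1}(x)/θ_ν(x)`. -/
def μ (n : ℕ) : K := PowerSeries.coeff n (θν1 * θν⁻¹)


/-!
Write `a_n`, `b_n` for the coefficients of `θ_ν`, `θ_{ν+1}`. Directly from the products,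
`(1 - Qq^{n+1}) b_n = (1 - Qq) q^n a_n` and `(1 - q^{n+1}) (1 - Qq) a_{n+1} = -Q (1 - q)^2 b_n`,
so `g = θ_{ν+1}/θ_ν` satisfies
`(1 - Qq) g(x) = ((1 - Qq) + Qq g(qx)) ((1 - Qq) + Q (1 - q)^2 x g(x))`, whence
`μ_{n+1} [ν+n+2] [ν+1] = Q μ_n + Q^2 q ∑_{i=1}^{n} q^i μ_i μ_{n-i}`.
Since `⌊a/k⌋ + ⌊b/k⌋ ≤ ⌊(a+b)/k⌋`, the denominator `D_{n+1} = ∏_{k ≤ n+2} [ν+k]^{⌊(n+2)/k⌋}` is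
`[ν+n+2] D_i D_{n-i}` times a product of brackets `[ν+k] = [ν] + Q (1 + q + ⋯ + q^{k-1})`, so by
strong induction `μ_n D_n / (Q^n [ν+1])` is a polynomial in `q`, `Q`, `[ν]` with coefficients in `ℕ`.

`σ` divides `a_n` by `Q^n` and `b_n` by `(qQ)^n`; the first relation, rescaled by `x ↦ x/(qQ)`,
then gives `σ g(x) = (1 - Qq) + Qq g(x/Q)`, i.e. `σ(μ_n) Q^n = q Q μ_n` for `n ≥ 1`.
-/

open Finset PowerSeries

lemma PowerSeries.rescale_C_mul {R : Type*} [CommSemiring R] (a c : R) (f : R⟦X⟧) :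
    rescale a (C c * f) = C c * rescale a f := by
  ext n
  simp only [coeff_rescale, coeff_C_mul]
  ring

section FloorProd

variable {M : Type*} [CommMonoid M] (f : ℕ → M)

def floorProd (a : ℕ) : M := ∏ k ∈ Icc 1 a, f k ^ (a / k)

lemma floorProd_one : floorProd f 1 = f 1 := by simp [floorProd]

lemma floorProd_succ (n : ℕ) :
    floorProd f (n + 1) = (∏ k ∈ Icc 1 n, f k ^ ((n + 1) / k)) * f (n + 1) := by
  rw [floorProd, prod_Icc_succ_top (by omega), Nat.div_self n.succ_pos, pow_one]

lemma floorProd_eq_prod_Icc {a N : ℕ} (h : a ≤ N) :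
    floorProd f a = ∏ k ∈ Icc 1 N, f k ^ (a / k) := by
  refine prod_subset (Icc_subset_Icc_right h) fun k hk hka => ?_
  rw [mem_Icc] at hk hka
  rw [Nat.div_eq_of_lt (by omega), pow_zero]

lemma prod_Icc_pow_div_eq_floorProd_mul {a b c N : ℕ} (ha : a ≤ N) (hb : b ≤ N)
    (hc : a + b = c) :
    ∏ k ∈ Icc 1 N, f k ^ (c / k)
      = floorProd f a * floorProd f b * ∏ k ∈ Icc 1 N, f k ^ (c / k - a / k - b / k) := by
  rw [floorProd_eq_prod_Icc f ha, floorProd_eq_prod_Icc f hb, ← prod_mul_distrib,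
    ← prod_mul_distrib]
  refine prod_congr rfl fun k _ => ?_
  rw [← pow_add, ← pow_add]
  have : a / k + b / k ≤ c / k := hc ▸ Nat.div_add_div_le_add_div
  congr 1
  omega

end FloorProd

namespace QKishore

lemma algebraMap_ne_zero_of_eval_ne_zero {p : MvPolynomial (Fin 2) ℚ} (x : Fin 2 → ℚ)
    (hp : MvPolynomial.eval x p ≠ 0) : algebraMap (MvPolynomial (Fin 2) ℚ) K p ≠ 0 := by
  rw [Ne, IsFractionRing.to_map_eq_zero_iff]
  rintro rfl
  simp at hp

lemma qv_ne_zero : qv ≠ 0 := algebraMap_ne_zero_of_eval_ne_zero 1 (by simp)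

lemma Qv_ne_zero : Qv ≠ 0 := algebraMap_ne_zero_of_eval_ne_zero 1 (by simp)

lemma one_sub_qv_pow_ne_zero {m : ℕ} (hm : m ≠ 0) : (1 : K) - qv ^ m ≠ 0 := by
  have h := algebraMap_ne_zero_of_eval_ne_zero (p := 1 - MvPolynomial.X 0 ^ m) 0 (by simp [hm])
  rwa [map_sub, map_one, map_pow] at h

lemma one_sub_qv_ne_zero : (1 : K) - qv ≠ 0 := by
  simpa using one_sub_qv_pow_ne_zero one_ne_zero

lemma one_sub_Qv_mul_qv_pow_ne_zero (m : ℕ) : (1 : K) - Qv * qv ^ m ≠ 0 := by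
  have h := algebraMap_ne_zero_of_eval_ne_zero
    (p := 1 - MvPolynomial.X 1 * MvPolynomial.X 0 ^ m) 0 (by simp)
  rwa [map_sub, map_one, map_mul, map_pow] at h

lemma qPoch_succ (a : K) (n : ℕ) : qPoch a (n + 1) = qPoch a n * (1 - a * qv ^ n) :=
  prod_range_succ _ n

lemma qPoch_succ' (a : K) (n : ℕ) : qPoch a (n + 1) = (1 - a) * qPoch (a * qv) n := by
  simp only [qPoch, prod_range_succ', pow_succ, pow_zero, mul_one, mul_assoc, mul_comm]

lemma qPoch_ne_zero {a : K} (ha : ∀ j, 1 - a * qv ^ j ≠ 0) (n : ℕ) : qPoch a n ≠ 0 :=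
  prod_ne_zero_iff.2 fun j _ => ha j

lemma qPoch_qv_ne_zero (n : ℕ) : qPoch qv n ≠ 0 :=
  qPoch_ne_zero (fun j => by simpa [pow_succ'] using one_sub_qv_pow_ne_zero j.succ_ne_zero) n

def θ (a : K) : K⟦X⟧ :=
  mk fun n => (-1) ^ n * qv ^ (n * (n - 1) / 2) * a ^ n * (1 - qv) ^ (2 * n)
    / (qPoch qv n * qPoch (a * qv) n)

lemma θν_eq : θν = θ Qv := rfl

lemma θν1_eq : θν1 = θ (Qv * qv) := by
  rw [θν1, θ, mul_assoc Qv qv qv, ← sq]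

lemma coeff_θ (a : K) (n : ℕ) : coeff n (θ a) = (-1) ^ n * qv ^ (n * (n - 1) / 2) * a ^ n
    * (1 - qv) ^ (2 * n) / (qPoch qv n * qPoch (a * qv) n) :=
  coeff_mk _ _

lemma coeff_θ_zero (a : K) : coeff 0 (θ a) = 1 := by simp [coeff_θ, qPoch]

lemma qPoch_mul_qv_ne_zero {a : K} (ha : ∀ j, 1 - a * qv ^ (j + 1) ≠ 0) (n : ℕ) :
    qPoch (a * qv) n ≠ 0 :=
  qPoch_ne_zero (fun j => by simpa [mul_assoc, ← pow_succ'] using ha j) n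

lemma coeff_θ_mul_qv {a : K} (ha : ∀ j, 1 - a * qv ^ (j + 1) ≠ 0) (n : ℕ) :
    coeff n (θ (a * qv)) * (1 - a * qv ^ (n + 1)) = (1 - a * qv) * qv ^ n * coeff n (θ a) := by
  have ha' : ∀ j, 1 - a * qv * qv ^ (j + 1) ≠ 0 := fun j => by
    simpa [mul_assoc, ← pow_succ'] using ha (j + 1)
  have hshift :
      qPoch (a * qv) n * (1 - a * qv ^ (n + 1)) = (1 - a * qv) * qPoch (a * qv * qv) n := by
    rw [← qPoch_succ', qPoch_succ, mul_assoc, ← pow_succ']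
  have h1 := qPoch_qv_ne_zero n
  have h2 := qPoch_mul_qv_ne_zero ha n
  have h3 := qPoch_mul_qv_ne_zero ha' n
  rw [coeff_θ, coeff_θ]
  generalize qPoch qv n = P at h1 ⊢
  generalize qPoch (a * qv) n = P₁ at h2 hshift ⊢
  generalize qPoch (a * qv * qv) n = P₂ at h3 hshift ⊢
  field_simp
  linear_combination qv ^ (n * (n - 1) / 2) * (a * qv) ^ n * (1 - qv) ^ (2 * n) * hshift

lemma coeff_θ_succ {a : K} (ha : ∀ j, 1 - a * qv ^ (j + 1) ≠ 0) (n : ℕ) :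
    coeff (n + 1) (θ a) * ((1 - qv ^ (n + 1)) * (1 - a * qv))
      = -(a * (1 - qv) ^ 2 * coeff n (θ (a * qv))) := by
  have ha' : ∀ j, 1 - a * qv * qv ^ (j + 1) ≠ 0 := fun j => by
    simpa [mul_assoc, ← pow_succ'] using ha (j + 1)
  have h1 := qPoch_qv_ne_zero n
  have h2 := qPoch_mul_qv_ne_zero ha' n
  have h3 := one_sub_qv_pow_ne_zero n.succ_ne_zero
  have h4 : 1 - a * qv ≠ 0 := by simpa using ha 0
  rw [coeff_θ, coeff_θ, qPoch_succ, qPoch_succ', Nat.triangle_succ, ← pow_succ']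
  generalize qPoch qv n = P at h1 ⊢
  generalize qPoch (a * qv * qv) n = P₂ at h2 ⊢
  generalize 1 - a * qv = u at h4 ⊢
  field_simp
  ring

lemma coeff_θ_succ_mul {a : K} (ha : ∀ j, 1 - a * qv ^ (j + 1) ≠ 0) (n : ℕ) :
    coeff (n + 1) (θ a) * ((1 - qv ^ (n + 1)) * (1 - a * qv ^ (n + 1)))
      = -(a * qv ^ n * (1 - qv) ^ 2 * coeff n (θ a)) := by
  have h : 1 - a * qv ≠ 0 := by simpa using ha 0
  apply mul_right_cancel₀ h
  linear_combination (1 - a * qv ^ (n + 1)) * coeff_θ_succ ha n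
    - a * (1 - qv) ^ 2 * coeff_θ_mul_qv ha n

lemma map_coeff_θ_mul_pow (σ : K →+* K) (hq : σ qv = qv⁻¹) {a : K} (ha₀ : a ≠ 0)
    (hσa : σ a = a⁻¹) (ha : ∀ j, 1 - a * qv ^ (j + 1) ≠ 0) (n : ℕ) :
    σ (coeff n (θ a)) * a ^ n = coeff n (θ a) := by
  induction n with
  | zero => simp [coeff_θ_zero]
  | succ n ih =>
    have hu : ((1 : K) - qv ^ (n + 1)) * (1 - a * qv ^ (n + 1)) ≠ 0 :=
      mul_ne_zero (one_sub_qv_pow_ne_zero n.succ_ne_zero) (ha n)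
    have hσ := congrArg σ (coeff_θ_succ_mul ha n)
    simp only [map_mul, map_neg, map_sub, map_one, map_pow, hq, hσa, inv_pow] at hσ
    have hq₀ := qv_ne_zero
    field_simp at hσ
    apply mul_right_cancel₀ (mul_ne_zero hu (pow_ne_zero (n + 2) hq₀))
    linear_combination a ^ (n + 1) * hσ - qv ^ (n + 2) * coeff_θ_succ_mul ha n
      - a * qv ^ (2 * n + 2) * (1 - qv) ^ 2 * ih

lemma map_θ (σ : K →+* K) (hq : σ qv = qv⁻¹) {a : K} (ha₀ : a ≠ 0)
    (hσa : σ a = a⁻¹) (ha : ∀ j, 1 - a * qv ^ (j + 1) ≠ 0) :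
    map σ (θ a) = rescale a⁻¹ (θ a) := by
  ext n
  rw [coeff_map, coeff_rescale, inv_pow, eq_inv_mul_iff_mul_eq₀ (pow_ne_zero n ha₀), mul_comm]
  exact map_coeff_θ_mul_pow σ hq ha₀ hσa ha n

lemma θ_mul_qv_eq {a : K} (ha : ∀ j, 1 - a * qv ^ (j + 1) ≠ 0) :
    θ (a * qv) = C (1 - a * qv) * rescale qv (θ a) + C (a * qv) * rescale qv (θ (a * qv)) := by
  ext n
  simp only [map_add, coeff_C_mul, coeff_rescale]
  linear_combination coeff_θ_mul_qv ha n

lemma C_mul_rescale_θ {a : K} (ha : ∀ j, 1 - a * qv ^ (j + 1) ≠ 0) :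
    C (1 - a * qv) * rescale qv (θ a)
      = C (1 - a * qv) * θ a + C (a * (1 - qv) ^ 2) * (X * θ (a * qv)) := by
  ext (_ | n)
  · simp only [map_add, coeff_C_mul, coeff_rescale, coeff_zero_X_mul, pow_zero, one_mul, mul_zero,
      add_zero]
  · simp only [map_add, coeff_C_mul, coeff_rescale, coeff_succ_X_mul]
    linear_combination -coeff_θ_succ ha n

lemma constantCoeff_θν : constantCoeff θν = 1 := by
  rw [← coeff_zero_eq_constantCoeff_apply, θν_eq, coeff_θ_zero]

def besselRatio : K⟦X⟧ := θν1 * θν⁻¹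

lemma coeff_besselRatio (n : ℕ) : coeff n besselRatio = μ n := rfl

lemma besselRatio_mul_θν : besselRatio * θν = θν1 := by
  rw [besselRatio, mul_assoc, PowerSeries.inv_mul_cancel _ (by simp [constantCoeff_θν]), mul_one]

lemma μ_zero : μ 0 = 1 := by
  have h := congrArg constantCoeff besselRatio_mul_θν
  rwa [map_mul, constantCoeff_θν, mul_one, ← coeff_zero_eq_constantCoeff_apply,
    ← coeff_zero_eq_constantCoeff_apply, θν1_eq, coeff_θ_zero] at h

lemma θν_ne_zero : θν ≠ 0 := fun h => by simpa [h] using constantCoeff_θν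

lemma θν1_eq_rescale :
    θν1 = C (1 - Qv * qv) * rescale qv θν + C (Qv * qv) * rescale qv θν1 := by
  rw [θν1_eq]; exact θ_mul_qv_eq (fun _ => one_sub_Qv_mul_qv_pow_ne_zero _)

lemma C_mul_besselRatio :
    C (1 - Qv * qv) * besselRatio
      = (C (1 - Qv * qv) + C (Qv * qv) * rescale qv besselRatio)
        * (C (1 - Qv * qv) + C (Qv * (1 - qv) ^ 2) * (X * besselRatio)) := by
  have hθν : C (1 - Qv * qv) * rescale qv θν
      = C (1 - Qv * qv) * θν + C (Qv * (1 - qv) ^ 2) * (X * θν1) := by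
    rw [θν1_eq]; exact C_mul_rescale_θ (fun _ => one_sub_Qv_mul_qv_pow_ne_zero _)
  have hresc : rescale qv θν1 = rescale qv besselRatio * rescale qv θν := by
    rw [← map_mul, besselRatio_mul_θν]
  apply mul_right_cancel₀ θν_ne_zero
  calc C (1 - Qv * qv) * besselRatio * θν
      = C (1 - Qv * qv) * (C (1 - Qv * qv) * rescale qv θν + C (Qv * qv) * rescale qv θν1) := by
        rw [mul_assoc, besselRatio_mul_θν, ← θν1_eq_rescale]
    _ = (C (1 - Qv * qv) + C (Qv * qv) * rescale qv besselRatio)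
          * (C (1 - Qv * qv) * rescale qv θν) := by
        rw [hresc]; ring
    _ = _ := by rw [hθν, ← besselRatio_mul_θν]; ring

lemma μ_succ_mul (n : ℕ) :
    μ (n + 1) * ((1 - Qv * qv ^ (n + 2)) * (1 - Qv * qv)) = Qv * (1 - qv) ^ 2
      * ((1 - Qv * qv) * μ n + Qv * qv * ∑ i ∈ range (n + 1), qv ^ i * μ i * μ (n - i)) := by
  have h := congrArg (coeff (n + 1)) C_mul_besselRatio
  have hexp : ∀ a b c d : K,
      (C a + C b * rescale qv besselRatio) * (C c + C d * (X * besselRatio))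
      = C (a * c) + C (a * d) * (X * besselRatio) + C (b * c) * rescale qv besselRatio
        + C (b * d) * (X * (rescale qv besselRatio * besselRatio)) := by
    intro a b c d; simp only [map_mul]; ring
  rw [hexp] at h
  simp only [map_add, coeff_C_mul, coeff_C, coeff_succ_X_mul, coeff_rescale,
    if_neg n.succ_ne_zero] at h
  rw [coeff_mul, Nat.sum_antidiagonal_eq_sum_range_succ_mk] at h
  simp only [coeff_rescale, coeff_besselRatio] at h
  linear_combination h

lemma μ_succ_mul_brk (n : ℕ) :
    μ (n + 1) * (brk (n + 2) * brk 1)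
      = Qv * μ n + Qv ^ 2 * qv * ∑ i ∈ Icc 1 n, qv ^ i * μ i * μ (n - i) := by
  have hsum : ∑ i ∈ range (n + 1), qv ^ i * μ i * μ (n - i)
      = μ n + ∑ i ∈ Icc 1 n, qv ^ i * μ i * μ (n - i) := by
    rw [sum_range_eq_add_Ico _ (by omega : 0 < n + 1), Finset.Ico_add_one_right_eq_Icc, μ_zero,
      pow_zero, one_mul, one_mul, Nat.sub_zero]
  have h₁ : brk (n + 2) * (1 - qv) = 1 - Qv * qv ^ (n + 2) :=
    div_mul_cancel₀ _ one_sub_qv_ne_zero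
  have h₂ : brk 1 * (1 - qv) = 1 - Qv * qv := by
    rw [brk, pow_one]; exact div_mul_cancel₀ _ one_sub_qv_ne_zero
  apply mul_right_cancel₀ (pow_ne_zero 2 one_sub_qv_ne_zero)
  linear_combination μ_succ_mul n + μ (n + 1) * brk 1 * (1 - qv) * h₁
    + μ (n + 1) * (1 - Qv * qv ^ (n + 2)) * h₂ + Qv ^ 2 * qv * (1 - qv) ^ 2 * hsum

lemma map_besselRatio (σ : K →+* K) (hq : σ qv = qv⁻¹) (hQ : σ Qv = Qv⁻¹) :
    map σ besselRatio = C (1 - Qv * qv) + C (Qv * qv) * rescale Qv⁻¹ besselRatio := by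
  have hθν : map σ θν = rescale Qv⁻¹ θν :=
    map_θ σ hq Qv_ne_zero hQ (fun _ => one_sub_Qv_mul_qv_pow_ne_zero _)
  have hθν1 : map σ θν1 = rescale (qv⁻¹ * Qv⁻¹) θν1 := by
    rw [θν1_eq, map_θ σ hq (mul_ne_zero Qv_ne_zero qv_ne_zero)
      (by rw [map_mul, hq, hQ, mul_inv])
      (fun j => by simpa [mul_assoc, ← pow_succ'] using one_sub_Qv_mul_qv_pow_ne_zero (j + 2)),
      mul_inv, mul_comm]
  have hresc : rescale (qv⁻¹ * Qv⁻¹) θν1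
      = C (1 - Qv * qv) * rescale Qv⁻¹ θν + C (Qv * qv) * rescale Qv⁻¹ θν1 := by
    have hqQ : qv * (qv⁻¹ * Qv⁻¹) = Qv⁻¹ := by rw [mul_inv_cancel_left₀ qv_ne_zero]
    conv_lhs => rw [θν1_eq_rescale]
    rw [map_add, rescale_C_mul, rescale_C_mul, rescale_rescale, rescale_rescale, hqQ]
  have hne : rescale Qv⁻¹ θν ≠ 0 := fun h => by
    have h₀ := congrArg (coeff 0) h
    rw [coeff_rescale, pow_zero, one_mul, θν_eq, coeff_θ_zero, map_zero] at h₀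
    exact one_ne_zero h₀
  apply mul_right_cancel₀ hne
  calc map σ besselRatio * rescale Qv⁻¹ θν = map σ θν1 := by
        rw [← hθν, ← map_mul, besselRatio_mul_θν]
    _ = C (1 - Qv * qv) * rescale Qv⁻¹ θν
          + C (Qv * qv) * rescale Qv⁻¹ (besselRatio * θν) := by
        rw [hθν1, hresc, besselRatio_mul_θν]
    _ = _ := by rw [map_mul (rescale Qv⁻¹)]; ring

lemma map_μ_mul_Qv_pow (σ : K →+* K) (hq : σ qv = qv⁻¹) (hQ : σ Qv = Qv⁻¹) {n : ℕ}
    (hn : n ≠ 0) :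
    σ (μ n) * Qv ^ n = qv * Qv * μ n := by
  have h := congrArg (coeff n) (map_besselRatio σ hq hQ)
  rw [coeff_map, map_add, coeff_C, if_neg hn, zero_add, coeff_C_mul, coeff_rescale,
    coeff_besselRatio, inv_pow] at h
  rw [h, mul_comm (Qv ^ n)⁻¹, mul_assoc, mul_assoc,
    inv_mul_cancel_right₀ (pow_ne_zero n Qv_ne_zero)]
  ring

def nnPoly : Subalgebra ℕ K := (MvPolynomial.aeval (R := ℕ) ![qv, Qv, brNu]).range

lemma qv_mem_nnPoly : qv ∈ nnPoly := ⟨MvPolynomial.X 0, MvPolynomial.aeval_X _ _⟩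

lemma Qv_mem_nnPoly : Qv ∈ nnPoly := ⟨MvPolynomial.X 1, MvPolynomial.aeval_X _ _⟩

lemma brNu_mem_nnPoly : brNu ∈ nnPoly := ⟨MvPolynomial.X 2, MvPolynomial.aeval_X _ _⟩

lemma brk_eq (k : ℕ) : brk k = brNu + Qv * ∑ j ∈ range k, qv ^ j := by
  have hgeom := geom_sum_mul qv k
  rw [brk, brNu, div_add' _ _ _ one_sub_qv_ne_zero, div_left_inj' one_sub_qv_ne_zero]
  linear_combination Qv * hgeom

lemma brk_mem_nnPoly (k : ℕ) : brk k ∈ nnPoly := by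
  rw [brk_eq]
  exact add_mem brNu_mem_nnPoly
    (mul_mem Qv_mem_nnPoly (sum_mem fun j _ => pow_mem qv_mem_nnPoly j))

lemma brk_ne_zero (k : ℕ) : brk k ≠ 0 :=
  div_ne_zero (one_sub_Qv_mul_qv_pow_ne_zero k) one_sub_qv_ne_zero

def numer (n : ℕ) : K := μ n * floorProd brk (n + 1) / (Qv ^ n * brk 1)

lemma μ_mul_floorProd (n : ℕ) : μ n * floorProd brk (n + 1) = Qv ^ n * brk 1 * numer n :=
  (mul_div_cancel₀ _ (mul_ne_zero (pow_ne_zero n Qv_ne_zero) (brk_ne_zero 1))).symm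

lemma numer_zero : numer 0 = 1 := by
  rw [numer, μ_zero, zero_add, floorProd_one, pow_zero, one_mul, div_self (brk_ne_zero 1)]

lemma μ_mul_μ_mul_floorProd {i j n : ℕ} (hij : i + j = n) (R : K) :
    μ i * μ j * (floorProd brk (i + 1) * floorProd brk (j + 1) * R)
      = Qv ^ n * brk 1 ^ 2 * (numer i * numer j * R) := by
  rw [← hij, pow_add]
  linear_combination (μ j * floorProd brk (j + 1) * R) * μ_mul_floorProd i
    + (Qv ^ i * brk 1 * numer i * R) * μ_mul_floorProd j

lemma numer_succ (n : ℕ) :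
    numer (n + 1)
      = numer n * ∏ k ∈ Icc 1 (n + 1), brk k ^ ((n + 2) / k - (n + 1) / k - 1 / k)
        + Qv * qv * ∑ i ∈ Icc 1 n, qv ^ i * numer i * numer (n - i)
            * ∏ k ∈ Icc 1 (n + 1), brk k ^ ((n + 2) / k - (i + 1) / k - (n - i + 1) / k) := by
  set E := ∏ k ∈ Icc 1 (n + 1), brk k ^ ((n + 2) / k) with hE
  have hD : floorProd brk (n + 2) = E * brk (n + 2) := floorProd_succ brk (n + 1)
  have hμ : μ (n + 1) * floorProd brk (n + 2) = Qv ^ (n + 1) * brk 1 * numer (n + 1) :=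
    μ_mul_floorProd (n + 1)
  have hEn : μ n * E = Qv ^ n * brk 1 ^ 2
      * (numer n * ∏ k ∈ Icc 1 (n + 1), brk k ^ ((n + 2) / k - (n + 1) / k - 1 / k)) := by
    rw [hE, prod_Icc_pow_div_eq_floorProd_mul brk (c := n + 2) le_rfl (by omega : 1 ≤ n + 1) rfl,
      ← mul_one (μ n), ← μ_zero, μ_mul_μ_mul_floorProd (add_zero n), numer_zero, mul_one]
  have hEsum : (∑ i ∈ Icc 1 n, qv ^ i * μ i * μ (n - i)) * E = Qv ^ n * brk 1 ^ 2
      * ∑ i ∈ Icc 1 n, qv ^ i * numer i * numer (n - i)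
          * ∏ k ∈ Icc 1 (n + 1), brk k ^ ((n + 2) / k - (i + 1) / k - (n - i + 1) / k) := by
    rw [sum_mul, mul_sum]
    refine sum_congr rfl fun i hi => ?_
    rw [mem_Icc] at hi
    rw [hE, prod_Icc_pow_div_eq_floorProd_mul brk (by omega : i + 1 ≤ n + 1)
      (by omega : n - i + 1 ≤ n + 1) (by omega), mul_assoc (qv ^ i), mul_assoc (qv ^ i),
      μ_mul_μ_mul_floorProd (Nat.add_sub_cancel' hi.2)]
    ring
  apply mul_left_cancel₀
    (mul_ne_zero (pow_ne_zero (n + 1) Qv_ne_zero) (pow_ne_zero 2 (brk_ne_zero 1)))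
  linear_combination -brk 1 * hμ + brk 1 * μ (n + 1) * hD + E * μ_succ_mul_brk n + Qv * hEn
    + Qv ^ 2 * qv * hEsum

lemma numer_mem_nnPoly (n : ℕ) : numer n ∈ nnPoly := by
  induction n using Nat.strong_induction_on with
  | _ n ih =>
    rcases n with _ | n
    · rw [numer_zero]
      exact one_mem _
    · have hprod : ∀ e : ℕ → ℕ, ∏ k ∈ Icc 1 (n + 1), brk k ^ e k ∈ nnPoly := fun e =>
        prod_mem fun k _ => pow_mem (brk_mem_nnPoly k) _
      rw [numer_succ]
      refine add_mem (mul_mem (ih n n.lt_succ_self) (hprod _))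
        (mul_mem (mul_mem Qv_mem_nnPoly qv_mem_nnPoly) (sum_mem fun i hi => ?_))
      rw [mem_Icc] at hi
      exact mul_mem (mul_mem (mul_mem (pow_mem qv_mem_nnPoly i) (ih i (by omega)))
        (ih (n - i) (by omega))) (hprod _)

end QKishore

open QKishore

/-- Theorem 2.4, the `q`-Kishore theorem with the usual base `q`: the same numerator
polynomial `P_n` (with nonnegative integer coefficients) serves for both the base `q⁻¹`
expansion (`μ_n`) and the base `q` expansion (`σ(μ_n)`), where `σ` is the field
automorphism of `K` with `σ(q) = q⁻¹`, `σ(Q) = Q⁻¹`. -/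
theorem q_kishore_base_q (σ : K ≃+* K) (hq : σ qv = qv⁻¹) (hQ : σ Qv = Qv⁻¹) :
    ∀ n : ℕ, 1 ≤ n → ∃ P : MvPolynomial (Fin 3) ℕ,
      μ n * ∏ k ∈ Finset.Icc 1 (n + 1), brk k ^ ((n + 1) / k)
          = Qv ^ n * brk 1 * MvPolynomial.aeval ![qv, Qv, brNu] P ∧
      σ (μ n) * ∏ k ∈ Finset.Icc 1 (n + 1), brk k ^ ((n + 1) / k)
          = qv * Qv * brk 1 * MvPolynomial.aeval ![qv, Qv, brNu] P := by
  intro n hn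
  obtain ⟨P, hP⟩ : ∃ P, MvPolynomial.aeval ![qv, Qv, brNu] P = numer n := numer_mem_nnPoly n
  have hμ := μ_mul_floorProd n
  rw [floorProd] at hμ
  have hσ : σ (μ n) * Qv ^ n = qv * Qv * μ n := map_μ_mul_Qv_pow σ hq hQ (by omega)
  refine ⟨P, by rw [hP]; exact hμ, ?_⟩
  rw [hP]
  apply mul_left_cancel₀ (pow_ne_zero n Qv_ne_zero)
  linear_combination (∏ k ∈ Icc 1 (n + 1), brk k ^ ((n + 1) / k)) * hσ + qv * Qv * hμ

end
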